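/- arXiv:2105.07338 — 7 statements merged into one kernel-verified Lean document; each statement's English description precedes it below -/
import Mathlib

section
/- Let ρ₊, ρ₋ ∈ [0,1) with ρ₊ + ρ₋ < 1, and let φ : ℝ → ℝ be any function. Define the modified loss φ̃(y, t) = ((1 - ρ_{-y})·φ(y·t) - ρ_y·φ(-y·t)) / (1 - ρ₊ - ρ₋) for y ∈ {+1, -1}, where ρ_{+1} = ρ₊ and ρ_{-1} = ρ₋. Suppose the observed label ỹ equals y with probability 1 - ρ_y and equals -y with probability ρ_y. Then the expectation of φ̃(ỹ, t) over the noisy label ỹ equals φ(y·t): (1 - ρ_y)·φ̃(y,t) + ρ_y·φ̃(-y,t) = φ(y·t). -/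
/-- With `a = ρ_y`, `b = ρ_{-y}`, `u = φ(y t)` and `v = φ(-y t)`, the left side is the expected
corrected loss under the noisy label. -/
theorem noise_corrected_loss_expectation (a b u v : ℝ) (hab : a + b ≠ 1) :
    (1 - a) * (((1 - b) * u - a * v) / (1 - a - b)) +
      a * (((1 - a) * v - b * u) / (1 - a - b)) = u := by
  have hD : 1 - a - b ≠ 0 := fun h => hab (by linarith)
  field_simp
  ring

theorem stmt_0_general (ρp ρm : ℝ)
    (hsum : ρp + ρm < 1) (φ : ℝ → ℝ) (t y : ℝ) (hy : y = 1 ∨ y = -1) :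
    let ρ : ℝ → ℝ := fun s => if s = 1 then ρp else ρm
    let φt : ℝ → ℝ → ℝ := fun s u =>
      ((1 - ρ (-s)) * φ (s * u) - ρ s * φ (-(s * u))) / (1 - ρp - ρm)
    (1 - ρ y) * φt y t + ρ y * φt (-y) t = φ (y * t) := by
  intro ρ φt
  have hρ_one : ρ 1 = ρp := if_pos rfl
  have hρ_neg_one : ρ (-1) = ρm := if_neg (by norm_num)
  rcases hy with rfl | rfl
  · simp only [φt, hρ_one, hρ_neg_one, neg_neg, neg_mul, one_mul]
    exact noise_corrected_loss_expectation ρp ρm _ _ hsum.ne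
  · simp only [φt, hρ_one, hρ_neg_one, neg_neg, neg_mul, one_mul, sub_right_comm _ ρp ρm]
    exact noise_corrected_loss_expectation ρm ρp _ _ (by linarith)

theorem stmt_0 (ρp ρm : ℝ) (hp0 : 0 ≤ ρp) (hp1 : ρp < 1) (hm0 : 0 ≤ ρm) (hm1 : ρm < 1)
    (hsum : ρp + ρm < 1) (φ : ℝ → ℝ) (t y : ℝ) (hy : y = 1 ∨ y = -1) :
    let ρ : ℝ → ℝ := fun s => if s = 1 then ρp else ρm
    let φt : ℝ → ℝ → ℝ := fun s u =>
      ((1 - ρ (-s)) * φ (s * u) - ρ s * φ (-(s * u))) / (1 - ρp - ρm)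
    (1 - ρ y) * φt y t + ρ y * φt (-y) t = φ (y * t) :=
  stmt_0_general ρp ρm hsum φ t y hy
end

section
/- Let q ≥ 1, and for each j ∈ {1,...,q} let ρ₊ʲ, ρ₋ʲ ∈ [0,1) with ρ₊ʲ + ρ₋ʲ < 1. Let φ : ℝ → ℝ be any bounded function, and define for y ∈ {+1,-1} and t ∈ ℝ the modified loss φ̃ⱼ(y, t) = ((1 - ρ_{-y}ʲ)·φ(y·t) - ρ_yʲ·φ(-y·t)) / (1 - ρ₊ʲ - ρ₋ʲ). Suppose each noisy label ỹⱼ equals yⱼ with probability 1 - ρ_{yⱼ}ʲ and -yⱼ with probability ρ_{yⱼ}ʲ, independently across j. Then E_{ỹ}[ Σ_{j=1}^q φ̃ⱼ(ỹⱼ, fⱼ) ] = Σ_{j=1}^q φ(yⱼ·fⱼ) for any f ∈ ℝ^q and y ∈ {+1,-1}^q. -/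
/-!
Averaging the corrected loss over a single flip gives back the clean loss: the weights
`1 - ρ_y` and `ρ_y` of the two noisy labels cancel the `φ(-y t)` terms and leave
`(1 - ρ₊ - ρ₋) φ(y t)`, which the normalisation divides out. Since the noise is independent
across labels, the expectation of the hamming sum is the sum of the one-label expectations.
-/

open Finset

section IndependentCoordinates

variable {ι α R : Type*} [Fintype ι] [DecidableEq ι] [Fintype α] [CommSemiring R]

theorem sum_prod_mul_apply_eq_sum (w : ι → α → R) (hw : ∀ k, ∑ a, w k a = 1)
    (g : α → R) (j : ι) :
    ∑ ε : ι → α, (∏ k, w k (ε k)) * g (ε j) = ∑ a, w j a * g a := by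
  -- Absorb `g` into the `j`-th factor; the sum then factorises and the other factors are `1`.
  calc ∑ ε : ι → α, (∏ k, w k (ε k)) * g (ε j)
      = ∑ ε : ι → α, ∏ k, w k (ε k) * (if k = j then g (ε k) else 1) := by
        refine sum_congr rfl fun ε _ => ?_
        rw [prod_mul_distrib, prod_ite_eq' univ j, if_pos (mem_univ j)]
    _ = ∏ k, ∑ a, w k a * (if k = j then g a else 1) :=
        (Fintype.prod_sum fun k a => w k a * if k = j then g a else 1).symm
    _ = ∑ a, w j a * g a := by
        rw [prod_eq_single j (fun k _ hk => by simpa [hk] using hw k) (by simp)]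
        simp

theorem sum_prod_mul_sum_eq_sum_sum (w : ι → α → R) (hw : ∀ k, ∑ a, w k a = 1)
    (g : ι → α → R) :
    ∑ ε : ι → α, (∏ k, w k (ε k)) * ∑ j, g j (ε j) = ∑ j, ∑ a, w j a * g j a := by
  simp_rw [mul_sum]
  rw [sum_comm]
  exact sum_congr rfl fun j _ => sum_prod_mul_apply_eq_sum w hw (g j) j

end IndependentCoordinates

/-- The paper's `ρ_s`; any `s ≠ 1` is read as the label `-1`. -/
noncomputable def flipRate (ρp ρm s : ℝ) : ℝ := if s = 1 then ρp else ρm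

noncomputable def correctedLoss (φ : ℝ → ℝ) (ρp ρm s u : ℝ) : ℝ :=
  ((1 - flipRate ρp ρm (-s)) * φ (s * u) - flipRate ρp ρm s * φ (-(s * u))) / (1 - ρp - ρm)

theorem flip_average_correctedLoss (φ : ℝ → ℝ) {ρp ρm s : ℝ} (u : ℝ) (hρ : ρp + ρm ≠ 1)
    (hs : s = 1 ∨ s = -1) :
    flipRate ρp ρm s * correctedLoss φ ρp ρm (-s) u
      + (1 - flipRate ρp ρm s) * correctedLoss φ ρp ρm s u = φ (s * u) := by
  have hden : 1 - ρp - ρm ≠ 0 := fun h => hρ (by linarith)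
  rcases hs with rfl | rfl <;>
    simp only [correctedLoss, flipRate, neg_neg, neg_mul, one_mul, if_true,
      show (-1 : ℝ) ≠ 1 by norm_num, if_false] <;>
    field_simp <;> ring

theorem stmt_1_general (q : ℕ) (ρp ρm : Fin q → ℝ)
    (hsum : ∀ j, ρp j + ρm j < 1) (φ : ℝ → ℝ)
    (f y : Fin q → ℝ) (hy : ∀ j, y j = 1 ∨ y j = -1) :
    let ρ : ℝ → Fin q → ℝ := fun s j => if s = 1 then ρp j else ρm j
    let φt : Fin q → ℝ → ℝ → ℝ := fun j s u =>
      ((1 - ρ (-s) j) * φ (s * u) - ρ s j * φ (-(s * u))) / (1 - ρp j - ρm j)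
    ∑ ε : Fin q → Bool,
        (∏ j, (if ε j then ρ (y j) j else 1 - ρ (y j) j)) *
          (∑ j, φt j (if ε j then -(y j) else y j) (f j))
      = ∑ j, φ (y j * f j) := by
  intro ρ φt
  refine (sum_prod_mul_sum_eq_sum_sum
    (fun j (b : Bool) => if b then ρ (y j) j else 1 - ρ (y j) j) (fun k => by simp)
    (fun j (b : Bool) => φt j (if b then -(y j) else y j) (f j))).trans
    (sum_congr rfl fun j _ => ?_)
  rw [Fintype.sum_bool]
  exact flip_average_correctedLoss φ (f j) (hsum j).ne (hy j)

theorem stmt_1 (q : ℕ) (hq : 1 ≤ q) (ρp ρm : Fin q → ℝ)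
    (hp0 : ∀ j, 0 ≤ ρp j) (hp1 : ∀ j, ρp j < 1) (hm0 : ∀ j, 0 ≤ ρm j) (hm1 : ∀ j, ρm j < 1)
    (hsum : ∀ j, ρp j + ρm j < 1) (φ : ℝ → ℝ) (Θ : ℝ) (hbdd : ∀ t, |φ t| ≤ Θ)
    (f y : Fin q → ℝ) (hy : ∀ j, y j = 1 ∨ y j = -1) :
    let ρ : ℝ → Fin q → ℝ := fun s j => if s = 1 then ρp j else ρm j
    let φt : Fin q → ℝ → ℝ → ℝ := fun j s u =>
      ((1 - ρ (-s) j) * φ (s * u) - ρ s j * φ (-(s * u))) / (1 - ρp j - ρm j)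
    ∑ ε : Fin q → Bool,
        (∏ j, (if ε j then ρ (y j) j else 1 - ρ (y j) j)) *
          (∑ j, φt j (if ε j then -(y j) else y j) (f j))
      = ∑ j, φ (y j * f j) :=
  stmt_1_general q ρp ρm hsum φ f y hy
end

section
/- Let ρ₊ʲ, ρ₋ʲ, ρ₊ᵏ, ρ₋ᵏ ∈ [0,1) with ρ₊ʲ + ρ₋ʲ < 1 and ρ₊ᵏ + ρ₋ᵏ < 1, and set κ = 1/((1-ρ₊ʲ-ρ₋ʲ)(1-ρ₊ᵏ-ρ₋ᵏ)). For a function φ : ℝ → ℝ and real t, define: φ̃(+1,-1) = κ[(1-ρ₋ʲ)(1-ρ₊ᵏ)φ(t) + ρ₊ʲρ₋ᵏφ(-t)], φ̃(-1,+1) = κ[(1-ρ₊ʲ)(1-ρ₋ᵏ)φ(-t) + ρ₋ʲρ₊ᵏφ(t)], φ̃(+1,+1) = -κ[ρ₊ʲ(1-ρ₋ᵏ)φ(-t) + ρ₊ᵏ(1-ρ₋ʲ)φ(t)], φ̃(-1,-1) = -κ[ρ₋ʲ(1-ρ₊ᵏ)φ(t) + ρ₋ᵏ(1-ρ₊ʲ)φ(-t)].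 Suppose (ỹⱼ, ỹₖ) are obtained from true labels (yⱼ, yₖ) by independent class-conditional flips with rates ρ_{yⱼ}ʲ and ρ_{yₖ}ᵏ. Then E_{(ỹⱼ,ỹₖ)}[φ̃(ỹⱼ, ỹₖ)] equals φ(t) if (yⱼ,yₖ)=(+1,-1), φ(-t) if (yⱼ,yₖ)=(-1,+1), and 0 if yⱼ = yₖ. -/
/-!
For a single label whose true value `y` is flipped with probability `ρ y`, the noise acts on a
loss `g` through the `2 × 2` matrix of flip probabilities, and `debias` applies its inverse
(which exists as long as `ρ₊ + ρ₋ < 1`); hence the noisy expectation of `debias ρ g` is `g y`.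
Since the two labels are flipped independently, the pairwise noisy expectation is an iterated
single-label one, so debiasing the target loss in both coordinates gives an unbiased estimator.
The four cases of `φ̃` are exactly this double debiasing of the loss that is `φ t` at `(+1, -1)`,
`φ (-t)` at `(-1, +1)` and `0` elsewhere.
-/

namespace ClassConditionalNoise

noncomputable def flipExpect (ρ : ℝ → ℝ) (y : ℝ) (g : ℝ → ℝ) : ℝ :=
  ∑ e : Bool, (if e then ρ y else 1 - ρ y) * g (if e then -y else y)

noncomputable def debias (ρ : ℝ → ℝ) (g : ℝ → ℝ) (s : ℝ) : ℝ :=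
  ((1 - ρ (-s)) * g s - ρ s * g (-s)) / (1 - ρ s - ρ (-s))

theorem flipExpect_debias {ρ : ℝ → ℝ} {y : ℝ} (h : 1 - ρ y - ρ (-y) ≠ 0) (g : ℝ → ℝ) :
    flipExpect ρ y (debias ρ g) = g y := by
  have h' : 1 - ρ (-y) - ρ y ≠ 0 := by contrapose! h; linarith
  simp only [flipExpect, debias, Fintype.sum_bool, if_true, Bool.false_eq_true, if_false, neg_neg]
  field_simp
  ring

theorem flipExpect_flipExpect_debias_debias {ρj ρk : ℝ → ℝ} {yj yk : ℝ}
    (hj : 1 - ρj yj - ρj (-yj) ≠ 0) (hk : 1 - ρk yk - ρk (-yk) ≠ 0) (ℓ : ℝ → ℝ → ℝ) :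
    flipExpect ρj yj (fun s => flipExpect ρk yk
      (debias ρk (fun u => debias ρj (fun s' => ℓ s' u) s))) = ℓ yj yk := by
  simp only [flipExpect_debias hk]
  exact flipExpect_debias hj (fun s => ℓ s yk)

noncomputable def classRate (ρpos ρneg y : ℝ) : ℝ := if y = 1 then ρpos else ρneg

theorem one_sub_classRate_sub_classRate_neg_ne_zero {ρpos ρneg y : ℝ} (hy : y = 1 ∨ y = -1)
    (h : ρpos + ρneg < 1) : 1 - classRate ρpos ρneg y - classRate ρpos ρneg (-y) ≠ 0 := by
  rcases hy with rfl | rfl <;> norm_num [classRate] <;> linarith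

noncomputable def pairwiseLoss (φ : ℝ → ℝ) (t s u : ℝ) : ℝ :=
  if s = 1 ∧ u = -1 then φ t else if s = -1 ∧ u = 1 then φ (-t) else 0

noncomputable def pairwiseEstimator (apj amj apk amk : ℝ) (φ : ℝ → ℝ) (t s u : ℝ) : ℝ :=
  let κ : ℝ := 1 / ((1 - apj - amj) * (1 - apk - amk))
  if s = 1 ∧ u = -1 then κ * ((1 - amj) * (1 - apk) * φ t + apj * amk * φ (-t))
  else if s = -1 ∧ u = 1 then κ * ((1 - apj) * (1 - amk) * φ (-t) + amj * apk * φ t)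
  else if s = 1 ∧ u = 1 then -(κ * (apj * (1 - amk) * φ (-t) + apk * (1 - amj) * φ t))
  else -(κ * (amj * (1 - apk) * φ t + amk * (1 - apj) * φ (-t)))

theorem pairwiseEstimator_eq_debias_debias {apj amj apk amk : ℝ} (hj : apj + amj < 1)
    (hk : apk + amk < 1) (φ : ℝ → ℝ) (t : ℝ) {s u : ℝ} (hs : s = 1 ∨ s = -1)
    (hu : u = 1 ∨ u = -1) :
    pairwiseEstimator apj amj apk amk φ t s u =
      debias (classRate apk amk)
        (fun u => debias (classRate apj amj) (fun s' => pairwiseLoss φ t s' u) s) u := by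
  have hDj : 1 - apj - amj ≠ 0 := by linarith
  have hDk : 1 - apk - amk ≠ 0 := by linarith
  have hDj' : 1 - amj - apj ≠ 0 := by linarith
  have hDk' : 1 - amk - apk ≠ 0 := by linarith
  rcases hs with rfl | rfl <;> rcases hu with rfl | rfl <;>
    norm_num [pairwiseEstimator, debias, classRate, pairwiseLoss] <;> field_simp <;> ring

end ClassConditionalNoise

open ClassConditionalNoise in
theorem stmt_3_general (apj amj apk amk : ℝ)
    (hj : apj + amj < 1) (hk : apk + amk < 1)
    (φ : ℝ → ℝ) (t : ℝ) (yj yk : ℝ) (hyj : yj = 1 ∨ yj = -1) (hyk : yk = 1 ∨ yk = -1) :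
    let κ : ℝ := 1 / ((1 - apj - amj) * (1 - apk - amk))
    let φt : ℝ → ℝ → ℝ := fun s1 s2 =>
      if s1 = 1 ∧ s2 = -1 then κ * ((1 - amj) * (1 - apk) * φ t + apj * amk * φ (-t))
      else if s1 = -1 ∧ s2 = 1 then κ * ((1 - apj) * (1 - amk) * φ (-t) + amj * apk * φ t)
      else if s1 = 1 ∧ s2 = 1 then -(κ * (apj * (1 - amk) * φ (-t) + apk * (1 - amj) * φ t))
      else -(κ * (amj * (1 - apk) * φ t + amk * (1 - apj) * φ (-t)))
    let rj : ℝ := if yj = 1 then apj else amj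
    let rk : ℝ := if yk = 1 then apk else amk
    ∑ e1 : Bool, ∑ e2 : Bool,
        (if e1 then rj else 1 - rj) * (if e2 then rk else 1 - rk) *
          φt (if e1 then -yj else yj) (if e2 then -yk else yk)
      = if yj = 1 ∧ yk = -1 then φ t else if yj = -1 ∧ yk = 1 then φ (-t) else 0 := by
  intro κ φt rj rk
  have flip_mem {y : ℝ} (hy : y = 1 ∨ y = -1) (e : Bool) :
      (if e then -y else y) = 1 ∨ (if e then -y else y) = -1 := by
    rcases hy with rfl | rfl <;> cases e <;> norm_num
  calc _ = flipExpect (classRate apj amj) yj (fun s => flipExpect (classRate apk amk) yk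
          (fun u => pairwiseEstimator apj amj apk amk φ t s u)) := by
        simp only [flipExpect, Finset.mul_sum, mul_assoc]; rfl
    _ = flipExpect (classRate apj amj) yj (fun s => flipExpect (classRate apk amk) yk
          (debias (classRate apk amk)
            (fun u => debias (classRate apj amj) (fun s' => pairwiseLoss φ t s' u) s))) := by
        simp only [flipExpect]
        congr! 4 with e1 - e2
        exact pairwiseEstimator_eq_debias_debias hj hk φ t (flip_mem hyj e1) (flip_mem hyk e2)
    _ = pairwiseLoss φ t yj yk := flipExpect_flipExpect_debias_debias
          (one_sub_classRate_sub_classRate_neg_ne_zero hyj hj)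
          (one_sub_classRate_sub_classRate_neg_ne_zero hyk hk) _

theorem stmt_3 (apj amj apk amk : ℝ)
    (h1 : 0 ≤ apj) (h2 : apj < 1) (h3 : 0 ≤ amj) (h4 : amj < 1)
    (h5 : 0 ≤ apk) (h6 : apk < 1) (h7 : 0 ≤ amk) (h8 : amk < 1)
    (hj : apj + amj < 1) (hk : apk + amk < 1)
    (φ : ℝ → ℝ) (t : ℝ) (yj yk : ℝ) (hyj : yj = 1 ∨ yj = -1) (hyk : yk = 1 ∨ yk = -1) :
    let κ : ℝ := 1 / ((1 - apj - amj) * (1 - apk - amk))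
    let φt : ℝ → ℝ → ℝ := fun s1 s2 =>
      if s1 = 1 ∧ s2 = -1 then κ * ((1 - amj) * (1 - apk) * φ t + apj * amk * φ (-t))
      else if s1 = -1 ∧ s2 = 1 then κ * ((1 - apj) * (1 - amk) * φ (-t) + amj * apk * φ t)
      else if s1 = 1 ∧ s2 = 1 then -(κ * (apj * (1 - amk) * φ (-t) + apk * (1 - amj) * φ t))
      else -(κ * (amj * (1 - apk) * φ t + amk * (1 - apj) * φ (-t)))
    let rj : ℝ := if yj = 1 then apj else amj
    let rk : ℝ := if yk = 1 then apk else amk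
    ∑ e1 : Bool, ∑ e2 : Bool,
        (if e1 then rj else 1 - rj) * (if e2 then rk else 1 - rk) *
          φt (if e1 then -yj else yj) (if e2 then -yk else yk)
      = if yj = 1 ∧ yk = -1 then φ t else if yj = -1 ∧ yk = 1 then φ (-t) else 0 :=
  stmt_3_general apj amj apk amk hj hk φ t yj yk hyj hyk
end

section
/- Let p : Y → [0,1] be a probability distribution over Y ⊆ {+1,-1}^q, and for indices j,k,t ∈ {1,...,q} define Δ_{j,k} = Σ_{y ∈ Y : y_j = -1, y_k = +1} p(y). If Δ_{j,k} ≤ Δ_{k,j} and Δ_{k,t} ≤ Δ_{t,k}, then Δ_{j,t} ≤ Δ_{t,j}. -/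
open Finset

theorem sum_filter_false_true_sub_sum_filter_false_true {α M : Type*} [Fintype α]
    [AddCommGroup M] (p : α → M) (f g : α → Bool) :
    ∑ y with g y = false ∧ f y = true, p y - ∑ y with f y = false ∧ g y = true, p y =
      ∑ y with f y = true, p y - ∑ y with g y = true, p y := by
  simp only [sum_filter, ← sum_sub_distrib]
  refine sum_congr rfl fun y _ => ?_
  cases f y <;> cases g y <;> simp

theorem stmt_5_general (q : ℕ) (p : (Fin q → Bool) → ℝ)
    (j k t : Fin q) :
    let Δ : Fin q → Fin q → ℝ := fun j k =>
      ∑ y ∈ Finset.univ.filter (fun y : Fin q → Bool => y j = false ∧ y k = true), p y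
    Δ j k ≤ Δ k j → Δ k t ≤ Δ t k → Δ j t ≤ Δ t j := by
  intro Δ hjk hkt
  -- `Δ a b ≤ Δ b a` just says that `a` is at least as likely to be relevant as `b`.
  have marginal_gap (a b : Fin q) :
      Δ b a - Δ a b = ∑ y with y a = true, p y - ∑ y with y b = true, p y :=
    sum_filter_false_true_sub_sum_filter_false_true p (· a) (· b)
  linarith [marginal_gap j k, marginal_gap k t, marginal_gap j t]

theorem stmt_5 (q : ℕ) (p : (Fin q → Bool) → ℝ)
    (hp0 : ∀ y, 0 ≤ p y) (hp1 : ∑ y : Fin q → Bool, p y = 1)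
    (j k t : Fin q) :
    let Δ : Fin q → Fin q → ℝ := fun j k =>
      ∑ y ∈ Finset.univ.filter (fun y : Fin q → Bool => y j = false ∧ y k = true), p y
    Δ j k ≤ Δ k j → Δ k t ≤ Δ t k → Δ j t ≤ Δ t j :=
  stmt_5_general q p j k t
end

section
/- Let φ : ℝ → ℝ be convex with φ differentiable at 0 and φ'(0) < 0, and let p⁺ ∈ [0,1], p⁻ = 1 - p⁺ with p⁺ ≠ 1/2. Define W(f) = p⁺·φ(f) + p⁻·φ(-f). Then inf_{f ∈ ℝ} W(f) < inf { W(f) : f ∈ ℝ, sign(f) ≠ sign(p⁺ - 1/2) }, where f = 0 is included in the set on the right. -/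
/-- Support line: a convex function on ℝ lies above its tangent at 0. -/
lemma support_line_aux (φ : ℝ → ℝ) (hconv : ConvexOn ℝ Set.univ φ)
    (d : ℝ) (hderiv : HasDerivAt φ d 0) (y : ℝ) : φ 0 + d * y ≤ φ y := by
  rcases lt_trichotomy y 0 with hy | hy | hy
  · have h := hconv.slope_le_of_hasDerivAt (Set.mem_univ y) (Set.mem_univ 0) hy hderiv
    rw [slope_def_field, div_le_iff₀ (by linarith : 0 < 0 - y)] at h
    nlinarith [h]
  · simp [hy]
  · have h := hconv.le_slope_of_hasDerivAt (Set.mem_univ 0) (Set.mem_univ y) hy hderiv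
    rw [slope_def_field, le_div_iff₀ (by linarith : 0 < y - 0)] at h
    nlinarith [h]

theorem stmt_7 (φ : ℝ → ℝ) (hconv : ConvexOn ℝ Set.univ φ)
    (d : ℝ) (hderiv : HasDerivAt φ d 0) (hd : d < 0)
    (pplus : ℝ) (hp0 : 0 ≤ pplus) (hp1 : pplus ≤ 1) (hphalf : pplus ≠ 1 / 2) :
    let W : ℝ → ℝ := fun f => pplus * φ f + (1 - pplus) * φ (-f)
    ∃ c : ℝ, (∀ f : ℝ, f * (2 * pplus - 1) ≤ 0 → c ≤ W f) ∧ ∃ g : ℝ, W g < c := by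
  intro W
  refine ⟨W 0, ?_, ?_⟩
  · intro f hf
    have h1 : φ 0 + d * f ≤ φ f := support_line_aux φ hconv d hderiv f
    have h2 : φ 0 + d * (-f) ≤ φ (-f) := support_line_aux φ hconv d hderiv (-f)
    have hdf : 0 ≤ d * (f * (2 * pplus - 1)) := by nlinarith
    simp only [W, neg_zero]
    nlinarith [h1, h2, hdf]
  · -- W has derivative e = (2*pplus - 1) * d ≠ 0 at 0
    set e : ℝ := (2 * pplus - 1) * d with he_def
    have hWderiv : HasDerivAt W e 0 := by
      have h1 : HasDerivAt (fun f : ℝ => φ (-f)) (-d) 0 := by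
        have h0 : HasDerivAt φ d (-(0:ℝ)) := by simpa using hderiv
        have := h0.comp 0 (hasDerivAt_neg (0 : ℝ))
        have h3 : HasDerivAt (φ ∘ Neg.neg) (-d) 0 := by simpa using this
        exact h3
      have := ((hderiv.const_mul pplus).add (h1.const_mul (1 - pplus)))
      exact this.congr_deriv (by rw [he_def]; ring)
    have he : e ≠ 0 := by
      intro h
      rcases mul_eq_zero.mp h with h' | h'
      · exact hphalf (by linarith)
      · exact hd.ne h'
    have hslope := hasDerivAt_iff_tendsto_slope.mp hWderiv
    rcases he.lt_or_gt with he' | he'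
    · -- e < 0 : find g > 0 with slope < 0
      have hsl : Filter.Tendsto (slope W 0) (nhdsWithin 0 (Set.Ioi 0)) (nhds e) :=
        hslope.mono_left (nhdsWithin_mono 0 (fun x hx => ne_of_gt hx))
      have hev : ∀ᶠ g in nhdsWithin 0 (Set.Ioi 0), slope W 0 g < 0 :=
        hsl.eventually (eventually_lt_nhds he')
      obtain ⟨g, hg, hgpos⟩ := (hev.and self_mem_nhdsWithin).exists
      refine ⟨g, ?_⟩
      have : (W g - W 0) / (g - 0) < 0 := by
        rw [slope_def_field] at hg
        simpa [div_eq_inv_mul] using hg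
      rw [sub_zero] at this
      have := (div_neg_iff.mp this)
      rcases this with ⟨h1, h2⟩ | ⟨h1, h2⟩
      · linarith [hgpos]
      · linarith
    · -- e > 0 : find g < 0 with slope > 0
      have hsl : Filter.Tendsto (slope W 0) (nhdsWithin 0 (Set.Iio 0)) (nhds e) :=
        hslope.mono_left (nhdsWithin_mono 0 (fun x hx => ne_of_lt hx))
      have hev : ∀ᶠ g in nhdsWithin 0 (Set.Iio 0), 0 < slope W 0 g :=
        hsl.eventually (eventually_gt_nhds he')
      obtain ⟨g, hg, hgneg⟩ := (hev.and self_mem_nhdsWithin).exists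
      refine ⟨g, ?_⟩
      have : 0 < (W g - W 0) / (g - 0) := by
        rw [slope_def_field] at hg
        simpa [div_eq_inv_mul] using hg
      rw [sub_zero] at this
      rcases div_pos_iff.mp this with ⟨h1, h2⟩ | ⟨h1, h2⟩
      · linarith [hgneg]
      · linarith
end

section
/- Let φ : ℝ → ℝ be differentiable, non-increasing, with φ'(0) < 0 and satisfying φ(t) + φ(-t) = 2φ(0) for all t. Let Δ₁, Δ₂ ≥ 0 with Δ₁ < Δ₂ and consider W(t) = Δ₁·φ(t) + Δ₂·φ(-t) for t ∈ ℝ. Then for every s ≥ 0, inf_{t ∈ ℝ} W(t) < W(s) provided the infimum is attained, and in general inf_{t ∈ ℝ} W(t) ≤ W(-s) ≤ W(s) with W(-s) < W(s) for s > 0. -/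
theorem stmt_8 (φ : ℝ → ℝ) (hdiff : Differentiable ℝ φ) (hmono : Antitone φ)
    (hderiv0 : deriv φ 0 < 0) (hsym : ∀ t, φ t + φ (-t) = 2 * φ 0)
    (Δ₁ Δ₂ : ℝ) (h1 : 0 ≤ Δ₁) (h2 : 0 ≤ Δ₂) (hlt : Δ₁ < Δ₂) :
    let W : ℝ → ℝ := fun t => Δ₁ * φ t + Δ₂ * φ (-t)
    (∀ s : ℝ, 0 ≤ s → W (-s) ≤ W s) ∧
    (∀ s : ℝ, 0 < s → W (-s) < W s) ∧
    (∀ tstar : ℝ, (∀ t : ℝ, W tstar ≤ W t) → tstar < 0) := by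
  intro W
  -- strict decrease lemma: for s > 0, φ s < φ 0
  have hstrict : ∀ s : ℝ, 0 < s → φ s < φ 0 := by
    intro s hs
    rcases lt_or_eq_of_le (hmono hs.le) with h | h
    · exact h
    · exfalso
      have hconst : φ =ᶠ[nhds (0:ℝ)] fun _ => φ 0 := by
        have hball : Metric.ball (0:ℝ) s ∈ nhds (0:ℝ) := Metric.ball_mem_nhds _ hs
        filter_upwards [hball] with x hx
        have hx' : |x| < s := by simpa [Real.dist_eq] using hx
        have key : ∀ y : ℝ, 0 ≤ y → y < s → φ y = φ 0 := by
          intro y hy0 hys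
          have h1' : φ y ≤ φ 0 := hmono hy0
          have h2' : φ s ≤ φ y := hmono hys.le
          linarith
        rcases le_or_gt 0 x with hx0 | hx0
        · exact key x hx0 (lt_of_abs_lt hx')
        · have := key (-x) (by linarith) (by cases abs_lt.mp hx'; linarith)
          have hsx := hsym (-x)
          simp only [neg_neg] at hsx
          linarith
      have : deriv φ 0 = 0 := by
        rw [Filter.EventuallyEq.deriv_eq hconst]
        simp
      linarith
  have hsle : ∀ s : ℝ, 0 ≤ s → W (-s) ≤ W s := by
    intro s hs
    have hφ : φ s ≤ φ 0 := hmono hs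
    have hsymm := hsym s
    simp only [W, neg_neg]
    nlinarith
  refine ⟨hsle, ?_, ?_⟩
  · intro s hs
    have hφ : φ s < φ 0 := hstrict s hs
    have hsymm := hsym s
    simp only [W, neg_neg]
    nlinarith
  · intro tstar hmin
    by_contra hge
    push_neg at hge
    have hφ1 : φ 1 < φ 0 := hstrict 1 one_pos
    rcases eq_or_lt_of_le hge with h0 | h0
    · -- tstar = 0 : W (-1) < W 0
      have hW : W (-1) < W 0 := by
        have hs1 := hsym 1
        simp only [W, neg_neg, neg_zero]
        nlinarith
      have := hmin (-1)
      subst h0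
      linarith
    · have h1' : W (-tstar) < W tstar := by
        have hφt : φ tstar < φ 0 := hstrict tstar h0
        have hsymm := hsym tstar
        simp only [W, neg_neg]
        nlinarith
      have := hmin (-tstar)
      linarith
end

section
/- Let ρʲ, ρᵏ ∈ [0,1) and φ : ℝ → ℝ. For the PML pairwise estimator with t = fⱼ - fₖ, define φ̃(+1,-1) = φ(t)/(1-ρᵏ), φ̃(-1,+1) = φ(-t)/(1-ρʲ), φ̃(+1,+1) = 0, and φ̃(-1,-1) = (-ρʲφ(t) - ρᵏφ(-t))/((1-ρʲ)(1-ρᵏ)). Under the PML noise model (a true -1 label on coordinate j flips to +1 with probability ρʲ independently; true +1 labels never flip), the expectation of φ̃(ỹⱼ, ỹₖ) over the noisy labels equals: φ(t) if (yⱼ,yₖ) = (+1,-1); φ(-t) if (yⱼ,yₖ) = (-1,+1); and 0 if yⱼ = yₖ. -/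
/-!
Expanding the expectation over the two independent flips gives four terms weighted by the flip
probabilities. A true `+1` never flips, so its rate is `0` and only the noisy labels reachable from
the true pair contribute. For `(+1, -1)` and `(-1, +1)` the factor `1 - ρ` of the surviving term
cancels the denominator of the corrected loss, and for `(-1, -1)` the correction in `φ̃(-1, -1)`
is chosen exactly so that the three contributions cancel.
-/

theorem sum_bool_flip_mul_flip {R α : Type*} [CommRing R] [Neg α] (rj rk : R) (yj yk : α)
    (g : α → α → R) :
    ∑ e1 : Bool, ∑ e2 : Bool,
        (if e1 then rj else 1 - rj) * (if e2 then rk else 1 - rk) *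
          g (if e1 then -yj else yj) (if e2 then -yk else yk)
      = rj * rk * g (-yj) (-yk) + rj * (1 - rk) * g (-yj) yk
        + (1 - rj) * rk * g yj (-yk) + (1 - rj) * (1 - rk) * g yj yk := by
  simp only [Fintype.sum_bool, if_true, Bool.false_eq_true, if_false]
  ring

theorem neg_neg_correction_expectation_eq_zero {K : Type*} [Field K] {ρj ρk : K}
    (hj : 1 - ρj ≠ 0) (hk : 1 - ρk ≠ 0) (a b : K) :
    ρj * (1 - ρk) * (a / (1 - ρk)) + (1 - ρj) * ρk * (b / (1 - ρj))
      + (1 - ρj) * (1 - ρk) * ((-(ρj * a) - ρk * b) / ((1 - ρj) * (1 - ρk))) = 0 := by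
  field_simp
  ring

theorem stmt_12_general (ρj ρk : ℝ) (hj1 : ρj < 1) (hk1 : ρk < 1)
    (φ : ℝ → ℝ) (t : ℝ) (yj yk : ℝ) (hyj : yj = 1 ∨ yj = -1) (hyk : yk = 1 ∨ yk = -1) :
    let φt : ℝ → ℝ → ℝ := fun s1 s2 =>
      if s1 = 1 ∧ s2 = -1 then φ t / (1 - ρk)
      else if s1 = -1 ∧ s2 = 1 then φ (-t) / (1 - ρj)
      else if s1 = 1 ∧ s2 = 1 then 0
      else (-(ρj * φ t) - ρk * φ (-t)) / ((1 - ρj) * (1 - ρk))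
    let rj : ℝ := if yj = 1 then 0 else ρj
    let rk : ℝ := if yk = 1 then 0 else ρk
    ∑ e1 : Bool, ∑ e2 : Bool,
        (if e1 then rj else 1 - rj) * (if e2 then rk else 1 - rk) *
          φt (if e1 then -yj else yj) (if e2 then -yk else yk)
      = if yj = 1 ∧ yk = -1 then φ t else if yj = -1 ∧ yk = 1 then φ (-t) else 0 := by
  intro φt rj rk
  have hj : 1 - ρj ≠ 0 := sub_ne_zero.mpr hj1.ne'
  have hk : 1 - ρk ≠ 0 := sub_ne_zero.mpr hk1.ne'
  have hne : (-1 : ℝ) ≠ 1 := by norm_num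
  rw [sum_bool_flip_mul_flip]
  rcases hyj with rfl | rfl <;> rcases hyk with rfl | rfl <;>
    simp only [φt, rj, rk, hne, hne.symm, neg_neg, ↓reduceIte, and_self, and_true, and_false,
      mul_zero, zero_mul, mul_one, one_mul, sub_zero, add_zero, zero_add]
  · exact mul_div_cancel₀ _ hk
  · exact mul_div_cancel₀ _ hj
  · exact neg_neg_correction_expectation_eq_zero hj hk _ _

theorem stmt_12 (ρj ρk : ℝ) (hj0 : 0 ≤ ρj) (hj1 : ρj < 1) (hk0 : 0 ≤ ρk) (hk1 : ρk < 1)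
    (φ : ℝ → ℝ) (t : ℝ) (yj yk : ℝ) (hyj : yj = 1 ∨ yj = -1) (hyk : yk = 1 ∨ yk = -1) :
    let φt : ℝ → ℝ → ℝ := fun s1 s2 =>
      if s1 = 1 ∧ s2 = -1 then φ t / (1 - ρk)
      else if s1 = -1 ∧ s2 = 1 then φ (-t) / (1 - ρj)
      else if s1 = 1 ∧ s2 = 1 then 0
      else (-(ρj * φ t) - ρk * φ (-t)) / ((1 - ρj) * (1 - ρk))
    let rj : ℝ := if yj = 1 then 0 else ρj
    let rk : ℝ := if yk = 1 then 0 else ρk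
    ∑ e1 : Bool, ∑ e2 : Bool,
        (if e1 then rj else 1 - rj) * (if e2 then rk else 1 - rk) *
          φt (if e1 then -yj else yj) (if e2 then -yk else yk)
      = if yj = 1 ∧ yk = -1 then φ t else if yj = -1 ∧ yk = 1 then φ (-t) else 0 :=
  stmt_12_general ρj ρk hj1 hk1 φ t yj yk hyj hyk
end
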